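/- Let k, L, w be positive integers and let the vectors w_{j,i} for 1 ≤ j ≤ w, 1 ≤ i ≤ L be independent random vectors, each distributed uniformly on the unit sphere S^{k−1} of ℝ^k. For x = (x_1, …, x_L) ∈ (ℝ^k)^L define the hash g(x) ∈ ℤ^{wL} whose (j, i)-th coordinate is ⌊⟨w_{j,i}, x_i⟩⌋. Then for any real c > 2√k and any fixed x, y ∈ (ℝ^k)^L satisfying ‖x_i − y_i‖₂ > c for every 1 ≤ i ≤ L, the probability that every coordinate of g(x) differs from the corresponding coordinate of g(y) by at most 1 is strictly less than (2√k / c)^{wL}. -/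

import Mathlib

/-!
A coordinate pair `⌊⟪v, x_i⟫⌋, ⌊⟪v, y_i⟫⌋` can differ by at most one only if `|⟪v, x_i - y_i⟫| < 2`,
i.e. only if `v` lies in the slab of half-width `t = 2 / ‖x_i - y_i‖` around the hyperplane
orthogonal to `x_i - y_i`. By independence it suffices to show that a uniform unit vector lies in
such a slab with probability at most `t √k`.

By rotation invariance this probability does not depend on the unit normal of the slab, so it
equals its average over normals drawn from the cone measure, the push-forward of Lebesgue measure
on the unit ball under `z ↦ z / ‖z‖`. By Fubini that average is the mean cone measure of a slab,
and for `z` in the unit ball, `z / ‖z‖` lying in a slab forces `z` into it. In coordinates the slab of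
the ball lies in `(-t, t)` times the `(k-1)`-dimensional unit ball, and log-convexity of `Γ`
shows `2 vol(B^{k-1}) ≤ √k vol(B^k)`.
-/

open MeasureTheory ProbabilityTheory Metric Real
open scoped InnerProductSpace

section Slab

variable {E : Type*} [NormedAddCommGroup E] [InnerProductSpace ℝ E]

def slab (e : E) (t : ℝ) : Set E := {v | |⟪v, e⟫_ℝ| < t}

theorem mem_slab {e v : E} {t : ℝ} : v ∈ slab e t ↔ |⟪v, e⟫_ℝ| < t := Iff.rfl

theorem measurableSet_slab [MeasurableSpace E] [OpensMeasurableSpace E] (e : E) (t : ℝ) :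
    MeasurableSet (slab e t) :=
  measurableSet_lt (continuous_id.inner continuous_const).abs.measurable measurable_const

theorem slab_smul {r : ℝ} (hr : 0 < r) (e : E) (t : ℝ) : slab (r • e) t = slab e (t / r) := by
  ext v
  rw [mem_slab, mem_slab, real_inner_smul_right, abs_mul, abs_of_pos hr, lt_div_iff₀ hr, mul_comm]

theorem LinearIsometryEquiv.preimage_slab (O : E ≃ₗᵢ[ℝ] E) (e : E) (t : ℝ) :
    O ⁻¹' slab e t = slab (O.symm e) t := by
  ext v
  rw [Set.mem_preimage, mem_slab, mem_slab, O.inner_map_eq_flip]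

theorem measure_slab_eq_of_norm_eq [MeasurableSpace E] [BorelSpace E] {μ : Measure E}
    (hrot : ∀ O : E ≃ₗᵢ[ℝ] E, μ.map O = μ) {e e' : E} (h : ‖e‖ = ‖e'‖) (t : ℝ) :
    μ (slab e t) = μ (slab e' t) := by
  set O := (ℝ ∙ (e - e'))ᗮ.reflection
  have hOe : O.symm e = e' := by
    rw [Submodule.reflection_symm]; exact Submodule.reflection_sub h
  conv_lhs => rw [← hrot O]
  rw [Measure.map_apply O.continuous.measurable (measurableSet_slab e t), O.preimage_slab, hOe]

theorem lintegral_measure_slab_comm [MeasurableSpace E] [OpensMeasurableSpace E]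
    [SecondCountableTopology E] (μ ν : Measure E) [SFinite μ] [SFinite ν] (t : ℝ) :
    ∫⁻ w, μ (slab w t) ∂ν = ∫⁻ v, ν (slab v t) ∂μ := by
  have hS : MeasurableSet {p : E × E | |⟪p.1, p.2⟫_ℝ| < t} :=
    measurableSet_lt continuous_inner.abs.measurable measurable_const
  have h := (Measure.prod_apply hS).symm.trans (Measure.prod_apply_symm (μ := μ) (ν := ν) hS)
  refine h.symm.trans (lintegral_congr fun v => congrArg ν (Set.ext fun w => ?_))
  simp [mem_slab, real_inner_comm]

end Slab

section Ball

variable (E : Type*) [NormedAddCommGroup E] [InnerProductSpace ℝ E] [FiniteDimensional ℝ E]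
  [MeasurableSpace E] [BorelSpace E]

noncomputable def coneMeasure : Measure E :=
  (volume.restrict (ball (0 : E) 1)).map fun z => ‖z‖⁻¹ • z

variable {E}

theorem LinearIsometryEquiv.map_volume_restrict_ball (O : E ≃ₗᵢ[ℝ] E) :
    (volume.restrict (ball (0 : E) 1)).map O = volume.restrict (ball 0 1) := by
  have h := O.measurePreserving.restrict_preimage (measurableSet_ball (x := (0 : E)) (ε := 1))
  rw [O.preimage_ball, map_zero] at h
  exact h.map_eq

theorem measurable_inv_norm_smul : Measurable fun z : E => ‖z‖⁻¹ • z :=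
  measurable_norm.inv.smul measurable_id

theorem coneMeasure_univ : coneMeasure E Set.univ = volume (ball (0 : E) 1) := by
  rw [coneMeasure, Measure.map_apply measurable_inv_norm_smul MeasurableSet.univ,
    Set.preimage_univ, Measure.restrict_apply_univ]

instance : IsFiniteMeasure (coneMeasure E) :=
  ⟨by rw [coneMeasure_univ]; exact measure_ball_lt_top⟩

theorem ae_norm_eq_one_coneMeasure [Nontrivial E] : ∀ᵐ w ∂coneMeasure E, ‖w‖ = 1 := by
  rw [coneMeasure, ae_map_iff measurable_inv_norm_smul.aemeasurable
    (measurableSet_eq_fun measurable_norm measurable_const)]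
  filter_upwards [ae_restrict_of_ae (Measure.ae_ne volume (0 : E))] with z hz
  rw [norm_smul, norm_inv, norm_norm, inv_mul_cancel₀ (norm_ne_zero_iff.2 hz)]

theorem coneMeasure_slab_le (v : E) (t : ℝ) :
    coneMeasure E (slab v t) ≤ volume.restrict (ball 0 1) (slab v t) := by
  rw [coneMeasure, Measure.map_apply measurable_inv_norm_smul (measurableSet_slab v t),
    Measure.restrict_apply' measurableSet_ball, Measure.restrict_apply' measurableSet_ball]
  refine measure_mono fun z ⟨hzt, hz⟩ => ⟨?_, hz⟩
  rcases eq_or_ne z 0 with rfl | hz0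
  · simpa using hzt
  rw [Set.mem_preimage, mem_slab, real_inner_smul_left, abs_mul, abs_inv, abs_norm,
    inv_mul_lt_iff₀ (norm_pos_iff.2 hz0)] at hzt
  rw [mem_ball_zero_iff] at hz
  rw [mem_slab]
  nlinarith [abs_nonneg ⟪z, v⟫_ℝ, norm_pos_iff.2 hz0]

end Ball

theorem Real.Gamma_add_half_le_sqrt_mul_Gamma {x : ℝ} (hx : 0 < x) :
    Gamma (x + 1 / 2) ≤ √x * Gamma x := by
  have h := Gamma_mul_add_mul_le_rpow_Gamma_mul_rpow_Gamma hx (by linarith : 0 < x + 1)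
    one_half_pos one_half_pos (add_halves 1)
  rw [show 1 / 2 * x + 1 / 2 * (x + 1) = x + 1 / 2 by ring, ← sqrt_eq_rpow, ← sqrt_eq_rpow,
    Gamma_add_one hx.ne', ← sqrt_mul (Gamma_pos_of_pos hx).le, mul_comm x,
    ← mul_assoc, sqrt_mul (mul_self_nonneg _), sqrt_mul_self (Gamma_pos_of_pos hx).le,
    mul_comm] at h
  exact h

theorem Real.two_mul_Gamma_add_half_le (n : ℕ) :
    2 * Gamma ((n + 1) / 2 + 1) ≤ √(n + 1) * √π * Gamma (n / 2 + 1) := by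
  -- At `n = 0` the inequality is an equality, which the log-convexity bound is too weak to give.
  rcases n.eq_zero_or_pos with rfl | hn
  · rw [show ((0 : ℕ) + 1 : ℝ) / 2 + 1 = 1 / 2 + 1 by norm_num, Gamma_add_one (by norm_num),
      Gamma_one_half_eq]
    simp
  have hx : (0 : ℝ) < n / 2 + 1 := by positivity
  have hsqrt : 2 * √(n / 2 + 1) ≤ √(n + 1) * √π := by
    rw [← sqrt_mul (by positivity), show (2 : ℝ) = √(2 ^ 2) by simp, ← sqrt_mul (by positivity)]
    have : (1 : ℝ) ≤ n := by exact_mod_cast hn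
    apply sqrt_le_sqrt
    nlinarith [pi_gt_three]
  calc 2 * Gamma ((n + 1) / 2 + 1) = 2 * Gamma ((n / 2 + 1) + 1 / 2) := by ring_nf
    _ ≤ 2 * (√(n / 2 + 1) * Gamma (n / 2 + 1)) :=
      mul_le_mul_of_nonneg_left (Gamma_add_half_le_sqrt_mul_Gamma hx) two_pos.le
    _ ≤ √(n + 1) * √π * Gamma (n / 2 + 1) := by
      rw [← mul_assoc]; exact mul_le_mul_of_nonneg_right hsqrt (Gamma_pos_of_pos hx).le

theorem EuclideanSpace.volume_ball_zero_one (n : ℕ) :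
    volume (ball (0 : EuclideanSpace ℝ (Fin n)) 1) =
      ENNReal.ofReal (√π ^ n / Gamma (n / 2 + 1)) := by
  rcases n.eq_zero_or_pos with rfl | hn
  · simp [volume_euclideanSpace_eq_dirac]
  · have : Nonempty (Fin n) := ⟨⟨0, hn⟩⟩
    simp [EuclideanSpace.volume_ball]

theorem two_mul_volume_ball_le (n : ℕ) :
    2 * volume (ball (0 : EuclideanSpace ℝ (Fin n)) 1) ≤
      ENNReal.ofReal √(n + 1) * volume (ball (0 : EuclideanSpace ℝ (Fin (n + 1))) 1) := by
  rw [EuclideanSpace.volume_ball_zero_one, EuclideanSpace.volume_ball_zero_one,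
    ← ENNReal.ofReal_ofNat, ← ENNReal.ofReal_mul zero_le_two, ← ENNReal.ofReal_mul (sqrt_nonneg _)]
  apply ENNReal.ofReal_le_ofReal
  have h1 := Gamma_pos_of_pos (by positivity : (0 : ℝ) < n / 2 + 1)
  have h2 := Gamma_pos_of_pos (by positivity : (0 : ℝ) < (n + 1) / 2 + 1)
  push_cast
  rw [pow_succ, mul_div_assoc', mul_div_assoc', div_le_div_iff₀ h1 h2]
  have := Real.two_mul_Gamma_add_half_le n
  calc 2 * √π ^ n * Gamma ((n + 1) / 2 + 1) = √π ^ n * (2 * Gamma ((n + 1) / 2 + 1)) := by ring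
    _ ≤ √π ^ n * (√(n + 1) * √π * Gamma (n / 2 + 1)) := by gcongr
    _ = _ := by ring

theorem measurePreserving_euclideanSpace_fin_succ (n : ℕ) :
    MeasurePreserving (fun z : EuclideanSpace ℝ (Fin (n + 1)) =>
      (z 0, WithLp.toLp 2 fun j : Fin n => z j.succ)) :=
  (((MeasurePreserving.id (volume : Measure ℝ)).prod (PiLp.volume_preserving_toLp (Fin n))).comp
    (measurePreserving_piFinSuccAbove (fun _ : Fin (n + 1) => (volume : Measure ℝ)) 0)).comp
    (PiLp.volume_preserving_ofLp (Fin (n + 1)))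

theorem volume_restrict_ball_slab_single_le (n : ℕ) (t : ℝ) :
    volume.restrict (ball 0 1) (slab (EuclideanSpace.single (0 : Fin (n + 1)) (1 : ℝ)) t) ≤
      ENNReal.ofReal (2 * t) * volume (ball (0 : EuclideanSpace ℝ (Fin n)) 1) := by
  rw [Measure.restrict_apply' measurableSet_ball]
  have hsub : slab (EuclideanSpace.single (0 : Fin (n + 1)) (1 : ℝ)) t ∩ ball 0 1 ⊆
      (fun z : EuclideanSpace ℝ (Fin (n + 1)) => (z 0, WithLp.toLp 2 fun j : Fin n => z j.succ)) ⁻¹'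
        Set.Ioo (-t) t ×ˢ ball 0 1 := by
    rintro z ⟨hzt, hz⟩
    rw [mem_ball_zero_iff] at hz
    rw [mem_slab, EuclideanSpace.inner_single_right] at hzt
    refine ⟨abs_lt.1 (by simpa using hzt), ?_⟩
    rw [mem_ball_zero_iff, ← sq_lt_one_iff₀ (norm_nonneg _), EuclideanSpace.real_norm_sq_eq]
    have := EuclideanSpace.real_norm_sq_eq z
    rw [Fin.sum_univ_succ] at this
    nlinarith [sq_nonneg (z 0), sq_lt_one_iff₀ (norm_nonneg z) |>.2 hz]
  calc _ ≤ _ := measure_mono hsub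
    _ = _ := by
      rw [(measurePreserving_euclideanSpace_fin_succ n).measure_preimage
        (measurableSet_Ioo.prod measurableSet_ball).nullMeasurableSet,
        Measure.volume_eq_prod, Measure.prod_prod, Real.volume_Ioo]
      ring_nf

theorem volume_restrict_ball_slab_le (n : ℕ) {v : EuclideanSpace ℝ (Fin (n + 1))} (hv : ‖v‖ = 1)
    {t : ℝ} (ht : 0 ≤ t) :
    volume.restrict (ball 0 1) (slab v t) ≤
      ENNReal.ofReal (t * √(n + 1 : ℕ)) * volume (ball (0 : EuclideanSpace ℝ (Fin (n + 1))) 1) := by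
  rw [measure_slab_eq_of_norm_eq LinearIsometryEquiv.map_volume_restrict_ball
    (e' := EuclideanSpace.single 0 1) (by simpa using hv)]
  calc _ ≤ ENNReal.ofReal (2 * t) * volume (ball (0 : EuclideanSpace ℝ (Fin n)) 1) :=
        volume_restrict_ball_slab_single_le n t
    _ = ENNReal.ofReal t * (2 * volume (ball (0 : EuclideanSpace ℝ (Fin n)) 1)) := by
        rw [mul_comm 2 t, ENNReal.ofReal_mul ht, ENNReal.ofReal_ofNat, mul_assoc]
    _ ≤ ENNReal.ofReal t * (ENNReal.ofReal √((n : ℝ) + 1) *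
          volume (ball (0 : EuclideanSpace ℝ (Fin (n + 1))) 1)) :=
        mul_le_mul_right (two_mul_volume_ball_le n) _
    _ = _ := by rw [← mul_assoc, ← ENNReal.ofReal_mul ht]; push_cast; rfl

theorem measure_slab_le_of_norm_eq_one (n : ℕ) (μ : Measure (EuclideanSpace ℝ (Fin (n + 1))))
    [IsProbabilityMeasure μ] (hsphere : μ (sphere 0 1)ᶜ = 0)
    (hrot : ∀ O : EuclideanSpace ℝ (Fin (n + 1)) ≃ₗᵢ[ℝ] EuclideanSpace ℝ (Fin (n + 1)), μ.map O = μ)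
    {e : EuclideanSpace ℝ (Fin (n + 1))} (he : ‖e‖ = 1) {t : ℝ} (ht : 0 ≤ t) :
    μ (slab e t) ≤ ENNReal.ofReal (t * √(n + 1 : ℕ)) := by
  let ν := coneMeasure (EuclideanSpace ℝ (Fin (n + 1)))
  have hν0 : ν Set.univ ≠ 0 := by
    rw [coneMeasure_univ]; exact (measure_ball_pos volume 0 one_pos).ne'
  have havg : μ (slab e t) * ν Set.univ = ∫⁻ v, ν (slab v t) ∂μ := by
    rw [← lintegral_measure_slab_comm, ← lintegral_const]
    refine lintegral_congr_ae ?_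
    filter_upwards [ae_norm_eq_one_coneMeasure] with w hw
    exact (measure_slab_eq_of_norm_eq hrot (hw.trans he.symm) t).symm
  have hbound : ∀ᵐ v ∂μ, ν (slab v t) ≤ ENNReal.ofReal (t * √(n + 1 : ℕ)) * ν Set.univ := by
    filter_upwards [measure_eq_zero_iff_ae_notMem.1 hsphere] with v hv
    rw [Set.notMem_compl_iff, mem_sphere_zero_iff_norm] at hv
    rw [coneMeasure_univ]
    exact (coneMeasure_slab_le v t).trans (volume_restrict_ball_slab_le n hv ht)
  rw [← ENNReal.mul_le_mul_iff_left hν0 (measure_ne_top ν _), havg]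
  calc _ ≤ ∫⁻ _, ENNReal.ofReal (t * √(n + 1 : ℕ)) * ν Set.univ ∂μ := lintegral_mono_ae hbound
    _ = _ := by rw [lintegral_const, measure_univ (μ := μ), mul_one]

theorem measure_slab_le (n : ℕ) (μ : Measure (EuclideanSpace ℝ (Fin (n + 1))))
    [IsProbabilityMeasure μ] (hsphere : μ (sphere 0 1)ᶜ = 0)
    (hrot : ∀ O : EuclideanSpace ℝ (Fin (n + 1)) ≃ₗᵢ[ℝ] EuclideanSpace ℝ (Fin (n + 1)), μ.map O = μ)
    {e : EuclideanSpace ℝ (Fin (n + 1))} (he : e ≠ 0) {t : ℝ} (ht : 0 ≤ t) :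
    μ (slab e t) ≤ ENNReal.ofReal (t * √(n + 1 : ℕ) / ‖e‖) := by
  have hpos : 0 < ‖e‖ := norm_pos_iff.2 he
  have hunit : ‖‖e‖⁻¹ • e‖ = 1 := by rw [norm_smul, norm_inv, norm_norm, inv_mul_cancel₀ hpos.ne']
  calc μ (slab e t) = μ (slab (‖e‖⁻¹ • e) (t / ‖e‖)) := by
        rw [← slab_smul hpos, smul_inv_smul₀ hpos.ne']
    _ ≤ ENNReal.ofReal (t / ‖e‖ * √(n + 1 : ℕ)) :=
        measure_slab_le_of_norm_eq_one n μ hsphere hrot hunit (by positivity)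
    _ = _ := by rw [div_mul_eq_mul_div]

theorem abs_sub_lt_two_of_abs_floor_sub_floor_le_one {a b : ℝ} (h : |⌊a⌋ - ⌊b⌋| ≤ 1) :
    |a - b| < 2 := by
  have h' : |((⌊a⌋ - ⌊b⌋ : ℤ) : ℝ)| ≤ 1 := by exact_mod_cast h
  rw [abs_le, Int.cast_sub] at h'
  rw [abs_lt]
  constructor <;> linarith [Int.floor_le a, Int.lt_floor_add_one a, Int.floor_le b,
    Int.lt_floor_add_one b]

theorem setOf_abs_floor_inner_sub_le_one_subset_slab {E : Type*} [NormedAddCommGroup E]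
    [InnerProductSpace ℝ E] (a b : E) :
    {v : E | |⌊⟪v, a⟫_ℝ⌋ - ⌊⟪v, b⟫_ℝ⌋| ≤ 1} ⊆ slab (a - b) 2 := fun v hv => by
  rw [mem_slab, inner_sub_right]
  exact abs_sub_lt_two_of_abs_floor_sub_floor_le_one hv

/-- Let the vectors `W (j, i)` for `j : Fin w`, `i : Fin L` be independent random vectors, each
distributed uniformly on the unit sphere `S^{k-1} ⊂ ℝ^k` (i.e. according to the
rotation-invariant probability measure `μ` supported on the sphere). Hash
`x = (x_1, …, x_L) ∈ (ℝ^k)^L` to `g(x) ∈ ℤ^{w·L}` whose `(j, i)`-th coordinate is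
`⌊⟨W (j, i), x_i⟩⌋`. Then for any `c > 2√k` and any fixed `x, y` with `‖x_i − y_i‖₂ > c` for
every `i`, the probability that every coordinate of `g x` differs from the corresponding
coordinate of `g y` by at most `1` is strictly less than `(2√k / c)^(w·L)`. -/
theorem hash_false_positive_prob (k L w : ℕ) (hk : 0 < k) (hL : 0 < L) (hw : 0 < w)
    {Ω : Type*} [MeasureSpace Ω] [IsProbabilityMeasure (ℙ : Measure Ω)]
    (μ : Measure (EuclideanSpace ℝ (Fin k))) [IsProbabilityMeasure μ]
    (hsphere : μ (Metric.sphere (0 : EuclideanSpace ℝ (Fin k)) 1)ᶜ = 0)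
    (hrot : ∀ O : EuclideanSpace ℝ (Fin k) ≃ₗᵢ[ℝ] EuclideanSpace ℝ (Fin k),
      μ.map O = μ)
    (W : Fin w × Fin L → Ω → EuclideanSpace ℝ (Fin k))
    (hWmeas : ∀ p, Measurable (W p))
    (hWdist : ∀ p, Measure.map (W p) ℙ = μ)
    (hWindep : iIndepFun W ℙ)
    (x y : Fin L → EuclideanSpace ℝ (Fin k)) (c : ℝ)
    (hc : 2 * Real.sqrt k < c) (hxy : ∀ i, c < ‖x i - y i‖) :
    ℙ {ω : Ω | ∀ (j : Fin w) (i : Fin L),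
        |⌊(inner ℝ (W (j, i) ω) (x i) : ℝ)⌋ - ⌊(inner ℝ (W (j, i) ω) (y i) : ℝ)⌋| ≤ 1}
      < ENNReal.ofReal ((2 * Real.sqrt k / c) ^ (w * L)) := by
  obtain ⟨n, rfl⟩ : ∃ n, k = n + 1 := ⟨k - 1, by omega⟩
  have : Nonempty (Fin L) := ⟨⟨0, hL⟩⟩
  obtain ⟨i₀, hi₀⟩ := Finite.exists_min fun i => ‖x i - y i‖
  have hc0 : 0 < c := lt_of_le_of_lt (by positivity) hc
  set C : Fin L → Set (EuclideanSpace ℝ (Fin (n + 1))) :=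
    fun i => {v | |⌊⟪v, x i⟫_ℝ⌋ - ⌊⟪v, y i⟫_ℝ⌋| ≤ 1}
  have hC : ∀ i, MeasurableSet (C i) := fun i =>
    measurableSet_le (by fun_prop) measurable_const
  have hfactor : ∀ p : Fin w × Fin L,
      ℙ (W p ⁻¹' C p.2) ≤ ENNReal.ofReal (2 * √(n + 1 : ℕ) / ‖x i₀ - y i₀‖) := fun p => by
    have hne : x p.2 - y p.2 ≠ 0 := norm_pos_iff.1 (hc0.trans (hxy p.2))
    rw [← Measure.map_apply (hWmeas p) (hC p.2), hWdist p]
    calc μ (C p.2) ≤ μ (slab (x p.2 - y p.2) 2) :=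
          measure_mono (setOf_abs_floor_inner_sub_le_one_subset_slab _ _)
      _ ≤ _ := measure_slab_le n μ hsphere hrot hne zero_le_two
      _ ≤ _ := ENNReal.ofReal_le_ofReal <|
          div_le_div_of_nonneg_left (by positivity) (hc0.trans (hxy i₀)) (hi₀ p.2)
  calc ℙ _ = ∏ p : Fin w × Fin L, ℙ (W p ⁻¹' C p.2) := by
        rw [← hWindep.meas_iInter fun p => ⟨C p.2, hC p.2, rfl⟩]
        congr 1; ext ω; simp [C]
    _ ≤ ENNReal.ofReal (2 * √(n + 1 : ℕ) / ‖x i₀ - y i₀‖) ^ (w * L) := by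
        refine (Finset.prod_le_prod' fun p _ => hfactor p).trans_eq ?_
        simp
    _ < ENNReal.ofReal (2 * √(n + 1 : ℕ) / c) ^ (w * L) := by
        refine (ENNReal.pow_lt_pow_left_iff (Nat.mul_pos hw hL).ne').2
          (ENNReal.ofReal_lt_ofReal_iff'.2 ⟨?_, by positivity⟩)
        exact div_lt_div_of_pos_left (by positivity) hc0 (hxy i₀)
    _ = _ := (ENNReal.ofReal_pow (by positivity) _).symm
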